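/- arXiv:1207.4257 — 2 statements merged into one kernel-verified Lean document; each statement's English description precedes it below -/
import Mathlib

section
/- Let $\mathfrak{h}_{2n+1}$ be the $(2n+1)$-dimensional Heisenberg Lie algebra with basis $\{x_1, \ldots, x_n, y_1, \ldots, y_n, z\}$, $[x_i, y_i] = z$ and all other brackets zero. Let $B = (b_{ij})$ be a symmetric $n \times n$ matrix over $k$ and $E = (e_i) \in k^n$. Define $\delta(x_i) = e_i\, z \otimes z$, $\delta(z) = 0$, and $\delta(y_i) = \sum_j b_{ij}(x_j \otimes z + z \otimes x_j)$. Then $(\mathfrak{h}_{2n+1}, \delta)$ is a coassociative Lie algebra. -/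
open TensorProduct

noncomputable section

variable (k : Type*) [Field k]

def Coassoc {V : Type*} [AddCommGroup V] [Module k V] (δ : V →ₗ[k] V ⊗[k] V) : Prop :=
  (TensorProduct.assoc k V V V).toLinearMap ∘ₗ (TensorProduct.map δ LinearMap.id) ∘ₗ δ
    = (TensorProduct.map LinearMap.id δ) ∘ₗ δ

abbrev UEA (L : Type*) [LieRing L] [LieAlgebra k L] := UniversalEnvelopingAlgebra k L

attribute [local instance 100] LieRing.ofAssociativeRing

/-- The canonical embedding `L → U(L)`, as a linear map. -/
def emb (L : Type*) [LieRing L] [LieAlgebra k L] : L →ₗ[k] UEA k L :=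
  (UniversalEnvelopingAlgebra.ι k).toLinearMap

/-- The canonical map `L ⊗ L → U(L) ⊗ U(L)`. -/
def emb2 (L : Type*) [LieRing L] [LieAlgebra k L] :
    L ⊗[k] L →ₗ[k] UEA k L ⊗[k] UEA k L :=
  TensorProduct.map (emb k L) (emb k L)

/-- The compatibility condition (E1.1.1)=(E1.2.2) for a coassociative Lie algebra,
stated inside `U(L) ⊗ U(L)`, where brackets are ring commutators.  (It encodes both
the identity `δ([a,b]) = b₁ ⊗ [a,b₂] + [a,b₁] ⊗ b₂ + [a₁,b] ⊗ a₂ + a₁ ⊗ [a₂,b] +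
[δ(a),δ(b)]` and the requirement that `[δ(a),δ(b)]` lies in `L ⊗ L`.) -/
def Compat {L : Type*} [LieRing L] [LieAlgebra k L] (δ : L →ₗ[k] L ⊗[k] L) : Prop :=
  ∀ a b : L,
    emb2 k L (δ ⁅a, b⁆) =
      ⁅(emb k L a) ⊗ₜ[k] (1 : UEA k L) + (1 : UEA k L) ⊗ₜ[k] (emb k L a), emb2 k L (δ b)⁆ +
      ⁅emb2 k L (δ a), (emb k L b) ⊗ₜ[k] (1 : UEA k L) + (1 : UEA k L) ⊗ₜ[k] (emb k L b)⁆ +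
      ⁅emb2 k L (δ a), emb2 k L (δ b)⁆

/-! The two middle terms of the compatibility condition are commutators in `U(L) ⊗ U(L)` with
`Δa = a ⊗ 1 + 1 ⊗ a`, and `[Δa, t]` is the adjoint action `a · t` for `t ∈ L ⊗ L`. So the condition
splits into the 1-cocycle identity `δ[a,b] = a · δ(b) - b · δ(a)` and `[δ(a), δ(b)] = 0`. The latter
holds because `δ` takes values in `A ⊗ A` for the abelian subspace `A = span(z, x₁, …, xₙ)`. The
cocycle identity is bilinear, so it suffices to check it on basis pairs; the only nontrivial pair
`(yᵢ, yⱼ)` gives `2 (bᵢⱼ - bⱼᵢ) z ⊗ z`, which vanishes since `B` is symmetric. Coassociativity is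
immediate: `δ` kills `z`, and both `δ ⊗ id` and `id ⊗ δ` send `δ(yᵢ)` to `Σⱼ bᵢⱼ eⱼ z ⊗ z ⊗ z`. -/

section Cocycle

variable {L : Type*} [LieRing L] [LieAlgebra k L]

def IsLieCocycle (δ : L →ₗ[k] L ⊗[k] L) : Prop :=
  ∀ a b : L, δ ⁅a, b⁆ = ⁅a, δ b⁆ - ⁅b, δ a⁆

variable {k}

theorem isLieCocycle_of_basis {ι : Type*} (b : Module.Basis ι k L) {δ : L →ₗ[k] L ⊗[k] L}
    (h : ∀ i j, δ ⁅b i, b j⁆ = ⁅b i, δ (b j)⁆ - ⁅b j, δ (b i)⁆) : IsLieCocycle k δ := by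
  let lhs : L →ₗ[k] L →ₗ[k] L ⊗[k] L := LinearMap.mk₂ k (fun a c => δ ⁅a, c⁆)
    (by simp [add_lie]) (by simp [smul_lie]) (by simp [lie_add]) (by simp [lie_smul])
  let rhs : L →ₗ[k] L →ₗ[k] L ⊗[k] L := LinearMap.mk₂ k (fun a c => ⁅a, δ c⁆ - ⁅c, δ a⁆)
    (by intros; simp [add_lie, lie_add]; abel) (by intros; simp [smul_lie, lie_smul, smul_sub])
    (by intros; simp [add_lie, lie_add]; abel) (by intros; simp [smul_lie, lie_smul, smul_sub])
  intro a c
  exact LinearMap.congr_fun₂ (LinearMap.ext_basis b b h : lhs = rhs) a c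

theorem lie_emb2 (a : L) (t : L ⊗[k] L) :
    ⁅emb k L a ⊗ₜ[k] (1 : UEA k L) + 1 ⊗ₜ[k] emb k L a, emb2 k L t⁆ = emb2 k L ⁅a, t⁆ := by
  induction t using TensorProduct.induction_on with
  | zero => simp
  | tmul p q =>
    simp only [emb2, emb, TensorProduct.map_tmul, LieModule.lie_tmul_right, map_add,
      LieHom.coe_toLinearMap, LieHom.map_lie, Ring.lie_def, add_mul, mul_add,
      Algebra.TensorProduct.tmul_mul_tmul, one_mul, mul_one, TensorProduct.sub_tmul,
      TensorProduct.tmul_sub]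
    abel
  | add t t' ht ht' => simp only [map_add, lie_add, ht, ht']

theorem commute_emb_of_lie_eq_zero {p q : L} (h : ⁅p, q⁆ = 0) :
    Commute (emb k L p) (emb k L q) := by
  rw [commute_iff_lie_eq]
  simpa [emb, h] using ((UniversalEnvelopingAlgebra.ι k (L := L)).map_lie p q).symm

theorem commute_emb2_of_mem_span {s : Set L} (hs : ∀ p ∈ s, ∀ q ∈ s, ⁅p, q⁆ = 0)
    {t t' : L ⊗[k] L} (ht : t ∈ Submodule.span k (Set.image2 (· ⊗ₜ[k] ·) s s))
    (ht' : t' ∈ Submodule.span k (Set.image2 (· ⊗ₜ[k] ·) s s)) :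
    Commute (emb2 k L t) (emb2 k L t') := by
  induction ht, ht' using Submodule.span_induction₂ with
  | mem_mem t t' ht ht' =>
    obtain ⟨p, hp, q, hq, rfl⟩ := ht
    obtain ⟨p', hp', q', hq', rfl⟩ := ht'
    exact (commute_emb_of_lie_eq_zero (hs p hp p' hp')).tmul
      (commute_emb_of_lie_eq_zero (hs q hq q' hq'))
  | zero_left => simp
  | zero_right => simp
  | add_left _ _ _ _ _ _ h h' => simpa only [map_add] using h.add_left h'
  | add_right _ _ _ _ _ _ h h' => simpa only [map_add] using h.add_right h'
  | smul_left r _ _ _ _ h => simpa only [map_smul] using h.smul_left r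
  | smul_right r _ _ _ _ h => simpa only [map_smul] using h.smul_right r

theorem compat_of_isLieCocycle {δ : L →ₗ[k] L ⊗[k] L} (hδ : IsLieCocycle k δ)
    (hcomm : ∀ a b, Commute (emb2 k L (δ a)) (emb2 k L (δ b))) : Compat k δ := by
  intro a b
  rw [lie_emb2, ← lie_skew (emb2 k L (δ a)), lie_emb2, commute_iff_lie_eq.mp (hcomm a b), hδ,
    map_sub]
  abel

end Cocycle

section Heisenberg

variable {k} {L : Type*} [LieRing L] [LieAlgebra k L] {n : ℕ}

theorem coassoc_heisenberg (b : Module.Basis (Fin n ⊕ Fin n ⊕ Unit) k L)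
    {X Y : Fin n → L} {z : L}
    (hX : ∀ i, X i = b (Sum.inl i)) (hY : ∀ i, Y i = b (Sum.inr (Sum.inl i)))
    (hz : z = b (Sum.inr (Sum.inr ())))
    {B : Matrix (Fin n) (Fin n) k} {E : Fin n → k} {δ : L →ₗ[k] L ⊗[k] L}
    (hδX : ∀ i, δ (X i) = E i • (z ⊗ₜ[k] z)) (hδz : δ z = 0)
    (hδY : ∀ i, δ (Y i) = ∑ j, B i j • (X j ⊗ₜ[k] z + z ⊗ₜ[k] X j)) :
    Coassoc k δ := by
  refine b.ext fun i => ?_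
  rcases i with i | i | ⟨⟩ <;>
    simp only [← hX, ← hY, ← hz, LinearMap.comp_apply, LinearEquiv.coe_coe]
  · simp [hδX, hδz]
  · simp [hδX, hδz, hδY, ← TensorProduct.smul_tmul', TensorProduct.tmul_smul, smul_smul]
  · simp [hδz]

theorem isLieCocycle_heisenberg (b : Module.Basis (Fin n ⊕ Fin n ⊕ Unit) k L)
    {X Y : Fin n → L} {z : L}
    (hX : ∀ i, X i = b (Sum.inl i)) (hY : ∀ i, Y i = b (Sum.inr (Sum.inl i)))
    (hz : z = b (Sum.inr (Sum.inr ())))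
    (hXX : ∀ i j, ⁅X i, X j⁆ = (0 : L)) (hYY : ∀ i j, ⁅Y i, Y j⁆ = (0 : L))
    (hXY : ∀ i j, ⁅X i, Y j⁆ = if i = j then z else 0)
    (hzX : ∀ i, ⁅z, X i⁆ = (0 : L)) (hzY : ∀ i, ⁅z, Y i⁆ = (0 : L))
    {B : Matrix (Fin n) (Fin n) k} (hBsymm : ∀ i j, B i j = B j i) {E : Fin n → k}
    {δ : L →ₗ[k] L ⊗[k] L}
    (hδX : ∀ i, δ (X i) = E i • (z ⊗ₜ[k] z)) (hδz : δ z = 0)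
    (hδY : ∀ i, δ (Y i) = ∑ j, B i j • (X j ⊗ₜ[k] z + z ⊗ₜ[k] X j)) :
    IsLieCocycle k δ := by
  have hYX : ∀ i j, ⁅Y i, X j⁆ = if j = i then -z else 0 := fun i j => by
    rw [← lie_skew, hXY]; split_ifs <;> simp
  have hXz : ∀ i, ⁅X i, z⁆ = 0 := fun i => by rw [← lie_skew, hzX, neg_zero]
  have hYz : ∀ i, ⁅Y i, z⁆ = 0 := fun i => by rw [← lie_skew, hzY, neg_zero]
  apply isLieCocycle_of_basis b
  rintro (i | i | ⟨⟩) (j | j | ⟨⟩) <;> simp only [← hX, ← hY, ← hz] <;>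
    simp [hXX, hYY, hXY, hYX, hXz, hYz, hzX, hzY, hδX, hδY, hδz, LieModule.lie_tmul_right,
      apply_ite δ, lie_sum, TensorProduct.ite_tmul, TensorProduct.tmul_ite, Finset.sum_add_distrib,
      hBsymm]

theorem heisenberg_coproduct_mem_span (b : Module.Basis (Fin n ⊕ Fin n ⊕ Unit) k L)
    {X Y : Fin n → L} {z : L}
    (hX : ∀ i, X i = b (Sum.inl i)) (hY : ∀ i, Y i = b (Sum.inr (Sum.inl i)))
    (hz : z = b (Sum.inr (Sum.inr ())))
    {B : Matrix (Fin n) (Fin n) k} {E : Fin n → k} {δ : L →ₗ[k] L ⊗[k] L}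
    (hδX : ∀ i, δ (X i) = E i • (z ⊗ₜ[k] z)) (hδz : δ z = 0)
    (hδY : ∀ i, δ (Y i) = ∑ j, B i j • (X j ⊗ₜ[k] z + z ⊗ₜ[k] X j)) (a : L) :
    δ a ∈ Submodule.span k
      (Set.image2 (· ⊗ₜ[k] ·) (insert z (Set.range X)) (insert z (Set.range X))) := by
  have htmul {p q : L} (hp : p ∈ insert z (Set.range X)) (hq : q ∈ insert z (Set.range X)) :
      p ⊗ₜ[k] q ∈ Submodule.span k
        (Set.image2 (· ⊗ₜ[k] ·) (insert z (Set.range X)) (insert z (Set.range X))) :=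
    Submodule.subset_span (Set.mem_image2_of_mem hp hq)
  have hzs : z ∈ insert z (Set.range X) := Set.mem_insert z _
  have hXs (j : Fin n) : X j ∈ insert z (Set.range X) := Set.mem_insert_of_mem z ⟨j, rfl⟩
  suffices Submodule.map δ (Submodule.span k (Set.range b)) ≤ _ by
    exact this (Submodule.mem_map_of_mem (b.mem_span a))
  rw [Submodule.map_span_le]
  rintro _ ⟨i | i | ⟨⟩, rfl⟩ <;> simp only [← hX, ← hY, ← hz]
  · rw [hδX]; exact Submodule.smul_mem _ _ (htmul hzs hzs)
  · rw [hδY]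
    exact Submodule.sum_mem _ fun j _ => Submodule.smul_mem _ _
      (add_mem (htmul (hXs j) hzs) (htmul hzs (hXs j)))
  · rw [hδz]; exact zero_mem _

end Heisenberg

/-- Example 4.3(b): on the `(2n+1)`-dimensional Heisenberg Lie algebra with basis
`x₁,…,xₙ, y₁,…,yₙ, z` and `[xᵢ, yⱼ] = δᵢⱼ z` (all other brackets zero), the coproduct
`δ(xᵢ) = eᵢ z ⊗ z`, `δ(z) = 0`, `δ(yᵢ) = Σⱼ bᵢⱼ (xⱼ ⊗ z + z ⊗ xⱼ)` with `B` symmetric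
defines a coassociative Lie algebra. -/
theorem example_heisenberg_coassociative_lie
    {L : Type*} [LieRing L] [LieAlgebra k L] {n : ℕ}
    (b : Module.Basis (Fin n ⊕ Fin n ⊕ Unit) k L)
    (X Y : Fin n → L) (z : L)
    (hX : ∀ i, X i = b (Sum.inl i)) (hY : ∀ i, Y i = b (Sum.inr (Sum.inl i)))
    (hz : z = b (Sum.inr (Sum.inr ())))
    (hXX : ∀ i j, ⁅X i, X j⁆ = (0 : L)) (hYY : ∀ i j, ⁅Y i, Y j⁆ = (0 : L))
    (hXY : ∀ i j, ⁅X i, Y j⁆ = if i = j then z else 0)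
    (hzX : ∀ i, ⁅z, X i⁆ = (0 : L)) (hzY : ∀ i, ⁅z, Y i⁆ = (0 : L))
    (B : Matrix (Fin n) (Fin n) k) (hBsymm : ∀ i j, B i j = B j i)
    (E : Fin n → k)
    (δ : L →ₗ[k] L ⊗[k] L)
    (hδX : ∀ i, δ (X i) = E i • (z ⊗ₜ[k] z))
    (hδz : δ z = 0)
    (hδY : ∀ i, δ (Y i) = ∑ j, B i j • (X j ⊗ₜ[k] z + z ⊗ₜ[k] X j)) :
    Coassoc k δ ∧ Compat k δ := by
  refine ⟨coassoc_heisenberg b hX hY hz hδX hδz hδY,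
    compat_of_isLieCocycle
      (isLieCocycle_heisenberg b hX hY hz hXX hYY hXY hzX hzY hBsymm hδX hδz hδY)
      fun a c => commute_emb2_of_mem_span ?_
        (heisenberg_coproduct_mem_span b hX hY hz hδX hδz hδY a)
        (heisenberg_coproduct_mem_span b hX hY hz hδX hδz hδY c)⟩
  rintro p (rfl | ⟨i, rfl⟩) q (rfl | ⟨j, rfl⟩)
  · exact lie_self _
  · exact hzX j
  · rw [← lie_skew, hzX, neg_zero]
  · exact hXX i j

end
end

section
/- Let $L$ be an anti-cocommutative coassociative Lie algebra over a field of characteristic not 2 such that its enveloping bialgebra $U(L)$ is a Hopf algebra with involutory antipode $S$ (i.e., $S^2 = \mathrm{id}$). Then $S(x) = -x$ for all $x \in L$. -/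
open TensorProduct

noncomputable section

attribute [local instance 100] LieRing.ofAssociativeRing

variable (k : Type*) [Field k]

/-! Coassociativity and anti-cocommutativity force `(δ ⊗ 1) δ = (1 ⊗ δ) δ = 0`: the cyclic
permutation of the three tensor factors acts on `(1 ⊗ δ) δ x` by `-1`, yet it has order three.
Hence `δ x ∈ ker δ ⊗ ker δ`, i.e. `δ x = ∑ aᵢ ⊗ bᵢ` with `aᵢ, bᵢ` primitive. The antipode
axiom then gives `S x = -x + μ` with `μ = ∑ aᵢ bᵢ`, and `S (a b) = b a` for primitive `a, b`,
so `S μ = ∑ bᵢ aᵢ = -μ` by anti-cocommutativity. Finally `x = S² x = x - 2μ`, so `μ = 0`. -/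

section Coalgebra

variable {k}
variable {V : Type*} [AddCommGroup V] [Module k V]

theorem eq_zero_of_eq_neg_of_two_ne_zero (h2 : (2 : k) ≠ 0) {v : V} (h : v = -v) : v = 0 := by
  have h2v : (2 : k) • v = 0 := by
    rw [two_smul]
    nth_rewrite 1 [h]
    exact neg_add_cancel v
  exact (smul_eq_zero.mp h2v).resolve_left h2

variable (k V) in
def tensorCycle : V ⊗[k] (V ⊗[k] V) ≃ₗ[k] V ⊗[k] (V ⊗[k] V) :=
  leftComm k V V V ≪≫ₗ (TensorProduct.comm k V V).lTensor V

@[simp]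
theorem tensorCycle_tmul (a b c : V) :
    tensorCycle k V (a ⊗ₜ (b ⊗ₜ c)) = b ⊗ₜ (c ⊗ₜ a) := by
  simp [tensorCycle, LinearEquiv.lTensor]

theorem tensorCycle_apply_apply_apply (t : V ⊗[k] (V ⊗[k] V)) :
    tensorCycle k V (tensorCycle k V (tensorCycle k V t)) = t := by
  have h : (tensorCycle k V).toLinearMap ∘ₗ (tensorCycle k V).toLinearMap ∘ₗ
      (tensorCycle k V).toLinearMap = LinearMap.id := by
    ext a b c
    simp
  exact LinearMap.congr_fun h t

theorem tensorCycle_lTensor (δ : V →ₗ[k] V ⊗[k] V) (t : V ⊗[k] V) :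
    tensorCycle k V (δ.lTensor V t) =
      TensorProduct.assoc k V V V (δ.rTensor V (TensorProduct.comm k V V t)) := by
  induction t using TensorProduct.induction_on with
  | zero => simp
  | add s t hs ht => simp only [map_add, hs, ht]
  | tmul a b =>
    simp only [LinearMap.lTensor_tmul, TensorProduct.comm_tmul, LinearMap.rTensor_tmul]
    induction δ b using TensorProduct.induction_on with
    | zero => simp
    | add s t hs ht => simp only [tmul_add, add_tmul, map_add, hs, ht]
    | tmul c d => simp

theorem lTensor_comp_self_eq_zero (h2 : (2 : k) ≠ 0) {δ : V →ₗ[k] V ⊗[k] V}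
    (hco : Coassoc k δ) (hanti : (TensorProduct.comm k V V).toLinearMap ∘ₗ δ = -δ) :
    δ.lTensor V ∘ₗ δ = 0 := by
  ext x
  set t := δ.lTensor V (δ x)
  have hcyc : tensorCycle k V t = -t := by
    calc tensorCycle k V t
        = TensorProduct.assoc k V V V (δ.rTensor V (TensorProduct.comm k V V (δ x))) :=
          tensorCycle_lTensor δ (δ x)
      _ = -TensorProduct.assoc k V V V (δ.rTensor V (δ x)) := by
          rw [show TensorProduct.comm k V V (δ x) = -δ x from LinearMap.congr_fun hanti x]
          simp only [map_neg]
      _ = -t := congrArg Neg.neg (LinearMap.congr_fun hco x)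
  apply eq_zero_of_eq_neg_of_two_ne_zero h2
  calc t = tensorCycle k V (tensorCycle k V (tensorCycle k V t)) :=
        (tensorCycle_apply_apply_apply t).symm
    _ = -t := by rw [hcyc, map_neg, hcyc, neg_neg, hcyc]

theorem rTensor_comp_self_eq_zero (h2 : (2 : k) ≠ 0) {δ : V →ₗ[k] V ⊗[k] V}
    (hco : Coassoc k δ) (hanti : (TensorProduct.comm k V V).toLinearMap ∘ₗ δ = -δ) :
    δ.rTensor V ∘ₗ δ = 0 := by
  ext x
  apply (TensorProduct.assoc k V V V).injective
  rw [LinearMap.zero_apply, map_zero]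
  exact (LinearMap.congr_fun hco x).trans
    (LinearMap.congr_fun (lTensor_comp_self_eq_zero h2 hco hanti) x)

end Coalgebra

section Flat

variable {k}
variable {V W : Type*} [AddCommGroup V] [Module k V] [AddCommGroup W] [Module k W]

theorem mem_range_map_subtype_ker {f : V →ₗ[k] W} {t : V ⊗[k] V}
    (hr : f.rTensor V t = 0) (hl : f.lTensor V t = 0) :
    t ∈ LinearMap.range (map (LinearMap.ker f).subtype (LinearMap.ker f).subtype) := by
  set N := LinearMap.ker f
  have hexact := LinearMap.exact_subtype_ker_map f
  obtain ⟨s, rfl⟩ := (Module.Flat.rTensor_exact V hexact t).mp hr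
  have hs : f.lTensor N s = 0 := by
    apply Module.Flat.rTensor_preserves_injective_linearMap (M := W) N.subtype N.injective_subtype
    rw [map_zero, ← LinearMap.comp_apply, LinearMap.rTensor_comp_lTensor,
      ← LinearMap.lTensor_comp_rTensor, LinearMap.comp_apply, hl]
  obtain ⟨r, rfl⟩ := (Module.Flat.lTensor_exact N hexact s).mp hs
  exact ⟨r, by rw [← LinearMap.comp_apply, LinearMap.rTensor_comp_lTensor]⟩

end Flat

section Antipode

variable {k}
variable {A V : Type*} [Ring A] [Algebra k A] [AddCommGroup V] [Module k V]

def IsLeftAntipode (Δ : A →ₐ[k] A ⊗[k] A) (ε : A →ₐ[k] k) (S : A →ₗ[k] A) : Prop :=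
  ∀ u, LinearMap.mul' k A (S.rTensor A (Δ u)) = ε u • 1

variable {Δ : A →ₐ[k] A ⊗[k] A} {ε : A →ₐ[k] k} {S : A →ₗ[k] A} {ι : V →ₗ[k] A}
  {δ : V →ₗ[k] V ⊗[k] V}

theorem IsLeftAntipode.map_one (hS : IsLeftAntipode Δ ε S) : S 1 = 1 := by
  simpa [Algebra.TensorProduct.one_def] using hS 1

theorem IsLeftAntipode.apply_eq_neg_sub (hS : IsLeftAntipode Δ ε S)
    (hΔ : ∀ a, Δ (ι a) = ι a ⊗ₜ 1 + 1 ⊗ₜ ι a + map ι ι (δ a))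
    (hε : ∀ a, ε (ι a) = 0) (a : V) :
    S (ι a) = -ι a - LinearMap.mul' k A (map (S ∘ₗ ι) ι (δ a)) := by
  have h := hS (ι a)
  rw [hΔ a, hε a, zero_smul] at h
  simp only [map_add, LinearMap.rTensor_tmul, LinearMap.rTensor_map, LinearMap.mul'_apply,
    hS.map_one, mul_one, one_mul] at h
  rw [← sub_eq_zero, ← h]
  abel

theorem IsLeftAntipode.apply_eq_neg_add_of_rTensor_eq_zero (hS : IsLeftAntipode Δ ε S)
    (hΔ : ∀ a, Δ (ι a) = ι a ⊗ₜ 1 + 1 ⊗ₜ ι a + map ι ι (δ a))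
    (hε : ∀ a, ε (ι a) = 0) {x : V} (hx : δ.rTensor V (δ x) = 0) :
    S (ι x) = -ι x + LinearMap.mul' k A (map ι ι (δ x)) := by
  set G := LinearMap.mul' k A ∘ₗ map (S ∘ₗ ι) ι
  have hG : G = -(LinearMap.mul' k A ∘ₗ map ι ι) -
      LinearMap.mul' k A ∘ₗ map G ι ∘ₗ δ.rTensor V := by
    apply TensorProduct.ext'
    intro a b
    simp only [G, LinearMap.comp_apply, LinearMap.sub_apply, LinearMap.neg_apply,
      TensorProduct.map_tmul, LinearMap.rTensor_tmul, LinearMap.mul'_apply,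
      hS.apply_eq_neg_sub hΔ hε a, sub_mul, neg_mul]
  have hGx : G (δ x) = -LinearMap.mul' k A (map ι ι (δ x)) := by
    rw [hG]
    simp only [LinearMap.sub_apply, LinearMap.neg_apply, LinearMap.comp_apply, hx, map_zero,
      sub_zero]
  rw [hS.apply_eq_neg_sub hΔ hε x]
  change -ι x - G (δ x) = _
  rw [hGx, sub_neg_eq_add]

theorem IsLeftAntipode.apply_mul_of_primitive (hS : IsLeftAntipode Δ ε S)
    (hΔ : ∀ a, Δ (ι a) = ι a ⊗ₜ 1 + 1 ⊗ₜ ι a + map ι ι (δ a))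
    (hε : ∀ a, ε (ι a) = 0) {a b : V} (ha : δ a = 0) (hb : δ b = 0) :
    S (ι a * ι b) = ι b * ι a := by
  have hprim : ∀ {c}, δ c = 0 → S (ι c) = -ι c ∧ Δ (ι c) = ι c ⊗ₜ 1 + 1 ⊗ₜ ι c :=
    fun hc => by
      rw [hS.apply_eq_neg_sub hΔ hε, hΔ, hc]
      simp
  obtain ⟨hSa, hΔa⟩ := hprim ha
  obtain ⟨hSb, hΔb⟩ := hprim hb
  have h := hS (ι a * ι b)
  rw [map_mul Δ, hΔa, hΔb, map_mul ε, hε, zero_mul, zero_smul] at h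
  simp only [add_mul, mul_add, Algebra.TensorProduct.tmul_mul_tmul, one_mul, mul_one, map_add,
    LinearMap.rTensor_tmul, LinearMap.mul'_apply, hS.map_one, hSa, hSb, neg_mul] at h
  rw [← sub_eq_zero, ← h]
  abel

theorem IsLeftAntipode.apply_mul'_map_of_mem_range (hS : IsLeftAntipode Δ ε S)
    (hΔ : ∀ a, Δ (ι a) = ι a ⊗ₜ 1 + 1 ⊗ₜ ι a + map ι ι (δ a))
    (hε : ∀ a, ε (ι a) = 0) {t : V ⊗[k] V}
    (ht : t ∈ LinearMap.range
      (map (LinearMap.ker δ).subtype (LinearMap.ker δ).subtype)) :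
    S (LinearMap.mul' k A (map ι ι t)) =
      LinearMap.mul' k A (map ι ι (TensorProduct.comm k V V t)) := by
  obtain ⟨r, rfl⟩ := ht
  induction r using TensorProduct.induction_on with
  | zero => simp
  | add r s hr hs => simp only [map_add, hr, hs]
  | tmul a b => simpa using hS.apply_mul_of_primitive hΔ hε a.2 b.2

end Antipode

theorem antipode_neg_on_L
    (hchar : (2 : k) ≠ 0)
    {L : Type*} [LieRing L] [LieAlgebra k L]
    (δ : L →ₗ[k] L ⊗[k] L)
    (hcoassoc : Coassoc k δ)
    (hanti : (TensorProduct.comm k L L).toLinearMap ∘ₗ δ = -δ)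
    (ΔU : UEA k L →ₐ[k] UEA k L ⊗[k] UEA k L)
    (hΔ : ∀ a : L, ΔU (emb k L a) =
      (emb k L a) ⊗ₜ[k] (1 : UEA k L) + (1 : UEA k L) ⊗ₜ[k] (emb k L a) +
        emb2 k L (δ a))
    (εU : UEA k L →ₐ[k] k)
    (hε : ∀ a : L, εU (emb k L a) = 0)
    (S : UEA k L →ₗ[k] UEA k L)
    (hS1 : ∀ u : UEA k L,
      LinearMap.mul' k (UEA k L) ((TensorProduct.map S LinearMap.id) (ΔU u)) =
        εU u • (1 : UEA k L))
    (hinv : ∀ u : UEA k L, S (S u) = u) :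
    ∀ x : L, S (emb k L x) = -(emb k L x) := by
  intro x
  have hS : IsLeftAntipode ΔU εU S := hS1
  have hr := LinearMap.congr_fun (rTensor_comp_self_eq_zero hchar hcoassoc hanti) x
  have hl := LinearMap.congr_fun (lTensor_comp_self_eq_zero hchar hcoassoc hanti) x
  set μ := LinearMap.mul' k (UEA k L) (emb2 k L (δ x))
  have hSx : S (emb k L x) = -emb k L x + μ := hS.apply_eq_neg_add_of_rTensor_eq_zero hΔ hε hr
  have hSμ : S μ = -μ := by
    refine (hS.apply_mul'_map_of_mem_range hΔ hε (mem_range_map_subtype_ker hr hl)).trans ?_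
    rw [show TensorProduct.comm k L L (δ x) = -δ x from LinearMap.congr_fun hanti x, map_neg,
      map_neg]
    rfl
  have hμ : μ = 0 := by
    have h := hinv (emb k L x)
    rw [hSx, map_add, map_neg, hSx, hSμ, neg_add, neg_neg, add_assoc, add_eq_left,
      neg_add_eq_zero] at h
    exact eq_zero_of_eq_neg_of_two_ne_zero hchar h
  rw [hSx, hμ, add_zero]

end
end
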